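/- arXiv:2111.01520 — 3 statements merged into one kernel-verified Lean document; each statement's English description precedes it below -/
import Mathlib

section
/- Let x, y ∈ ℝ^d and let p, q be unit vectors with |⟨p,q⟩| ≤ 1/√2. Suppose t₁, τ₁ ∈ ℝ satisfy ‖(x + t₁p) − (y + τ₁q)‖ ≤ 2. Then for every pair (t, τ) with max(|t − t₁|, |τ − τ₁|) ≥ 12, one has ‖(x + t·p) − (y + τ·q)‖ ≥ 6. -/
/-!
Write `a = t - t₁`, `b = τ - τ₁` and `c = ⟪p, q⟫`. The displacement `a • p - b • q` has squared
length `a² - 2abc + b² ≥ a² + b² - √2 |a| |b|`, and completing the square,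
`a² + b² - √2 |a| |b| = (|b| - |a| / √2)² + a² / 2`, bounds this below by `max |a| |b| ² / 2 ≥ 72`.
So the displacement has length more than `8`, and the triangle inequality leaves at least `6`
after subtracting the initial distance `2`.
-/

open Real

lemma sq_max_abs_le_two_mul_of_abs_le_inv_sqrt_two {c : ℝ} (hc : |c| ≤ 1 / √2) (a b : ℝ) :
    max |a| |b| ^ 2 ≤ 2 * (a ^ 2 - 2 * a * b * c + b ^ 2) := by
  have hsqrt : √2 ^ 2 = 2 := sq_sqrt zero_le_two
  have hc2 : 2 * |c| ≤ √2 := by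
    rw [le_div_iff₀ (by positivity)] at hc
    nlinarith [sqrt_nonneg 2]
  have hcross : 2 * a * b * c ≤ √2 * (|a| * |b|) := by
    have : a * b * c ≤ |a| * |b| * |c| := by
      rw [← abs_mul, ← abs_mul]; exact le_abs_self _
    nlinarith [mul_le_mul_of_nonneg_left hc2 (mul_nonneg (abs_nonneg a) (abs_nonneg b))]
  rcases le_total |a| |b| with hab | hba
  · rw [max_eq_right hab]
    nlinarith [sq_nonneg (√2 * |a| - |b|), sq_abs a, sq_abs b]
  · rw [max_eq_left hba]
    nlinarith [sq_nonneg (√2 * |b| - |a|), sq_abs a, sq_abs b]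

section InnerProductSpace

variable {E : Type*} [NormedAddCommGroup E] [InnerProductSpace ℝ E]

lemma norm_smul_sub_smul_sq_of_norm_eq_one {p q : E} (hp : ‖p‖ = 1) (hq : ‖q‖ = 1) (a b : ℝ) :
    ‖a • p - b • q‖ ^ 2 = a ^ 2 - 2 * a * b * inner ℝ p q + b ^ 2 := by
  rw [norm_sub_sq_real, norm_smul, norm_smul, real_inner_smul_left, real_inner_smul_right,
    hp, hq, norm_eq_abs, norm_eq_abs]
  rw [mul_one, mul_one, sq_abs, sq_abs]
  ring

lemma eight_le_norm_smul_sub_smul {p q : E} (hp : ‖p‖ = 1) (hq : ‖q‖ = 1)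
    (hpq : |(inner ℝ p q : ℝ)| ≤ 1 / √2) {a b : ℝ} (hab : 12 ≤ max |a| |b|) :
    8 ≤ ‖a • p - b • q‖ := by
  have hsq := sq_max_abs_le_two_mul_of_abs_le_inv_sqrt_two hpq a b
  rw [← norm_smul_sub_smul_sq_of_norm_eq_one hp hq] at hsq
  nlinarith [norm_nonneg (a • p - b • q)]

end InnerProductSpace

/-- If two parametrized lines with nearly orthogonal unit directions come within distance 2
at parameters `(t₁, τ₁)`, then at any `(t, τ)` with `max |t−t₁| |τ−τ₁| ≥ 12` the points are
at distance at least 6. -/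
theorem lines_separate (d : ℕ) (x y p q : EuclideanSpace ℝ (Fin d))
    (hp : ‖p‖ = 1) (hq : ‖q‖ = 1) (hpq : |(inner ℝ p q : ℝ)| ≤ 1 / Real.sqrt 2)
    (t₁ τ₁ : ℝ) (h₁ : ‖(x + t₁ • p) - (y + τ₁ • q)‖ ≤ 2) :
    ∀ t τ : ℝ, max |t - t₁| |τ - τ₁| ≥ 12 →
      ‖(x + t • p) - (y + τ • q)‖ ≥ 6 := by
  intro t τ hmax
  have hfar := eight_le_norm_smul_sub_smul hp hq hpq hmax
  have hsplit : (t - t₁) • p - (τ - τ₁) • q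
      = ((x + t • p) - (y + τ • q)) - ((x + t₁ • p) - (y + τ₁ • q)) := by
    module
  have htri := norm_sub_le ((x + t • p) - (y + τ • q)) ((x + t₁ • p) - (y + τ₁ • q))
  rw [← hsplit] at htri
  linarith
end

section
/- Let x, y ∈ ℝ^d and let p, q be unit vectors with |⟨p,q⟩| ≤ 1/√2. Suppose the line ℓ_{x,p,∞} intersects the closed ball B(y + τ₁·q, 2) for some τ₁ ∈ ℝ. Then for every τ₂ with |τ₁ − τ₂| ≥ 12, the line ℓ_{x,p,∞} is disjoint from the closed ball B(y + τ₂·q, 2); in fact dist(ℓ_{x,p,∞}, y + τ₂·q) ≥ 6. -/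
/-!
Write `v = x + t₁ • p - (y + τ₁ • q)` for the hitting point's offset, `‖v‖ ≤ 2`. Then
`x + t • p - (y + τ₂ • q) = v + ((t - t₁) • p + (τ₁ - τ₂) • q)`, and the second summand is at least
as long as the component of `(τ₁ - τ₂) • q` orthogonal to `p`, whose squared length is
`(τ₁ - τ₂) ^ 2 * (1 - ⟪p, q⟫ ^ 2) ≥ (τ₁ - τ₂) ^ 2 / 2`. Hence every point of the line is at distance
at least `12 / √2 - 2 = 6 √2 - 2 > 6` from `y + τ₂ • q`.
-/

open Real

section

variable {E : Type*} [NormedAddCommGroup E] [InnerProductSpace ℝ E]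

-- The left side is the squared distance from `τ • q` to the line `ℝ ∙ p`.
lemma sq_mul_sub_inner_sq_le_norm_smul_add_smul_sq {p : E} (hp : ‖p‖ = 1) (q : E) (s τ : ℝ) :
    τ ^ 2 * (‖q‖ ^ 2 - inner ℝ p q ^ 2) ≤ ‖s • p + τ • q‖ ^ 2 := by
  have hexpand : ‖s • p + τ • q‖ ^ 2 =
      (s + τ * inner ℝ p q) ^ 2 + τ ^ 2 * (‖q‖ ^ 2 - inner ℝ p q ^ 2) := by
    rw [norm_add_sq_real, norm_smul, norm_smul, hp, real_inner_smul_left, real_inner_smul_right,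
      mul_pow, mul_pow, Real.norm_eq_abs, Real.norm_eq_abs, sq_abs, sq_abs]
    ring
  rw [hexpand]
  exact le_add_of_nonneg_left (sq_nonneg _)

lemma abs_div_sqrt_two_le_norm_smul_add_smul {p q : E} (hp : ‖p‖ = 1) (hq : ‖q‖ = 1)
    (hpq : |(inner ℝ p q : ℝ)| ≤ 1 / √2) (s τ : ℝ) :
    |τ| / √2 ≤ ‖s • p + τ • q‖ := by
  have hinner : inner ℝ p q ^ 2 ≤ 1 / 2 := by
    calc inner ℝ p q ^ 2 = |(inner ℝ p q : ℝ)| ^ 2 := (sq_abs _).symm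
      _ ≤ (1 / √2) ^ 2 := by gcongr
      _ = 1 / 2 := by rw [div_pow, sq_sqrt zero_le_two, one_pow]
  have hsq : (|τ| / √2) ^ 2 ≤ ‖s • p + τ • q‖ ^ 2 := by
    calc (|τ| / √2) ^ 2 = τ ^ 2 * (1 - 1 / 2) := by
          rw [div_pow, sq_abs, sq_sqrt zero_le_two]; ring
      _ ≤ τ ^ 2 * (‖q‖ ^ 2 - inner ℝ p q ^ 2) := by rw [hq, one_pow]; gcongr
      _ ≤ ‖s • p + τ • q‖ ^ 2 := sq_mul_sub_inner_sq_le_norm_smul_add_smul_sq hp q s τ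
  exact (pow_le_pow_iff_left₀ (by positivity) (norm_nonneg _) two_ne_zero).mp hsq

lemma abs_sub_div_sqrt_two_sub_le_dist {p q : E} (hp : ‖p‖ = 1) (hq : ‖q‖ = 1)
    (hpq : |(inner ℝ p q : ℝ)| ≤ 1 / √2) {x y : E} {t₁ τ₁ r : ℝ}
    (hhit : dist (x + t₁ • p) (y + τ₁ • q) ≤ r) (t τ₂ : ℝ) :
    |τ₁ - τ₂| / √2 - r ≤ dist (y + τ₂ • q) (x + t • p) := by
  have hdecomp : x + t • p - (y + τ₂ • q) =
      ((t - t₁) • p + (τ₁ - τ₂) • q) + (x + t₁ • p - (y + τ₁ • q)) := by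
    module
  rw [dist_eq_norm] at hhit
  rw [dist_comm, dist_eq_norm, hdecomp]
  have hmove := abs_div_sqrt_two_le_norm_smul_add_smul hp hq hpq (t - t₁) (τ₁ - τ₂)
  have htri := norm_sub_le_norm_add ((t - t₁) • p + (τ₁ - τ₂) • q) (x + t₁ • p - (y + τ₁ • q))
  linarith

end

section

variable {E : Type*} [NormedAddCommGroup E] [NormedSpace ℝ E]

lemma line_inter_closedBall_eq_empty {x p z : E} {r : ℝ} (h : ∀ t : ℝ, r < dist z (x + t • p)) :
    {w | ∃ t : ℝ, w = x + t • p} ∩ Metric.closedBall z r = ∅ := by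
  ext w
  simp only [Set.mem_inter_iff, Set.mem_ofPred_eq, Metric.mem_closedBall, Set.mem_empty_iff_false,
    iff_false, not_and, not_le]
  rintro ⟨t, rfl⟩
  rw [dist_comm]
  exact h t

lemma le_infDist_line {x p z : E} {r : ℝ} (h : ∀ t : ℝ, r ≤ dist z (x + t • p)) :
    r ≤ Metric.infDist z {w | ∃ t : ℝ, w = x + t • p} := by
  have hne : {w | ∃ t : ℝ, w = x + t • p}.Nonempty := ⟨x + (0 : ℝ) • p, 0, rfl⟩
  rw [Metric.le_infDist hne]
  rintro _ ⟨t, rfl⟩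
  exact h t

end

/-- If a line hits a ball of radius 2 centered at `y + τ₁ • q` on another line with nearly
orthogonal unit direction, then it misses every ball of radius 2 centered at `y + τ₂ • q`
with `|τ₁ − τ₂| ≥ 12`; in fact the distance from the line to that center is at least 6. -/
theorem line_misses_far_balls (d : ℕ) (x y p q : EuclideanSpace ℝ (Fin d))
    (hp : ‖p‖ = 1) (hq : ‖q‖ = 1) (hpq : |(inner ℝ p q : ℝ)| ≤ 1 / Real.sqrt 2)
    (τ₁ : ℝ) (hhit : ∃ t : ℝ, (x + t • p) ∈ Metric.closedBall (y + τ₁ • q) 2) :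
    ∀ τ₂ : ℝ, |τ₁ - τ₂| ≥ 12 →
      {z | ∃ t : ℝ, z = x + t • p} ∩ Metric.closedBall (y + τ₂ • q) 2 = ∅ ∧
        Metric.infDist (y + τ₂ • q) {z | ∃ t : ℝ, z = x + t • p} ≥ 6 := by
  obtain ⟨t₁, ht₁⟩ := hhit
  intro τ₂ hτ
  have hsqrt : √2 ≤ 3 / 2 := by
    rw [sqrt_le_left (by norm_num)]; norm_num
  have hfar : ∀ t : ℝ, 6 ≤ dist (y + τ₂ • q) (x + t • p) := fun t => by
    calc (6 : ℝ) ≤ 12 / √2 - 2 := by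
          rw [le_sub_iff_add_le, le_div_iff₀ (by positivity)]; linarith
      _ ≤ |τ₁ - τ₂| / √2 - 2 := by gcongr
      _ ≤ dist (y + τ₂ • q) (x + t • p) :=
          abs_sub_div_sqrt_two_sub_le_dist hp hq hpq (Metric.mem_closedBall.mp ht₁) t τ₂
  exact ⟨line_inter_closedBall_eq_empty fun t => by linarith [hfar t], le_infDist_line hfar⟩
end

section
/- The function d ↦ Γ((d+1)/2)/Γ(d/2 + 1) is decreasing on real d ≥ 2; in particular, for every real d ≥ 2, 2√π · Γ((d+1)/2)/Γ(d/2+1) ≤ π. -/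
open Real

lemma gamma_half_ratio_anti {x y : ℝ} (hx : 0 < x) (hxy : x ≤ y) :
    Gamma y / Gamma (y + 1 / 2) ≤ Gamma x / Gamma (x + 1 / 2) := by
  rcases eq_or_lt_of_le hxy with rfl | hlt
  · exact le_rfl
  have hy : (0:ℝ) < y := lt_of_lt_of_le hx hxy
  have hx2 : (0:ℝ) < x + 1/2 := by linarith
  have hy2 : (0:ℝ) < y + 1/2 := by linarith
  set f : ℝ → ℝ := log ∘ Gamma with hf
  have h1 := Real.convexOn_log_Gamma.secant_mono (a := x) (x := x + 1/2) (y := y + 1/2)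
    (Set.mem_Ioi.2 hx) (Set.mem_Ioi.2 hx2) (Set.mem_Ioi.2 hy2)
    (by intro h; linarith [h]) (by intro h; linarith [h]) (by linarith)
  have h2 := Real.convexOn_log_Gamma.secant_mono (a := y + 1/2) (x := x) (y := y)
    (Set.mem_Ioi.2 hy2) (Set.mem_Ioi.2 hx) (Set.mem_Ioi.2 hy)
    (by intro h; linarith [h]) (by intro h; linarith [h]) hxy
  set g := log ∘ Gamma
  have e1 : (g (x + 1/2) - g x) / (x + 1/2 - x) = 2 * (g (x+1/2) - g x) := by
    rw [show x + 1/2 - x = 1/2 by ring]; ring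
  have e3 : (g x - g (y + 1/2)) / (x - (y + 1/2)) = (g (y+1/2) - g x) / (y + 1/2 - x) := by
    rw [show x - (y + 1/2) = -(y + 1/2 - x) by ring, div_neg]; ring
  have e4 : (g y - g (y + 1/2)) / (y - (y + 1/2)) = 2 * (g (y+1/2) - g y) := by
    rw [show y - (y + 1/2) = -(1/2 : ℝ) by ring, div_neg]; ring
  have key : g (x+1/2) - g x ≤ g (y+1/2) - g y := by
    rw [e1] at h1; rw [e3, e4] at h2; linarith
  have hgx : g x = log (Gamma x) := rfl
  have hΓx : 0 < Gamma x := Real.Gamma_pos_of_pos hx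
  have hΓy : 0 < Gamma y := Real.Gamma_pos_of_pos hy
  have hΓx2 : 0 < Gamma (x + 1/2) := Real.Gamma_pos_of_pos hx2
  have hΓy2 : 0 < Gamma (y + 1/2) := Real.Gamma_pos_of_pos hy2
  have hlog : log (Gamma y / Gamma (y + 1/2)) ≤ log (Gamma x / Gamma (x + 1/2)) := by
    rw [Real.log_div hΓy.ne' hΓy2.ne', Real.log_div hΓx.ne' hΓx2.ne']
    have : g y - g (y+1/2) ≤ g x - g (x+1/2) := by linarith
    exact this
  exact (Real.log_le_log_iff (div_pos hΓy hΓy2) (div_pos hΓx hΓx2)).1 hlog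

/-- `d ↦ Γ((d+1)/2)/Γ(d/2+1)` is decreasing on `[2, ∞)`; in particular
`2√π · Γ((d+1)/2)/Γ(d/2+1) ≤ π` for all real `d ≥ 2`. -/
theorem gamma_ratio_antitone :
    AntitoneOn (fun d : ℝ => Gamma ((d + 1) / 2) / Gamma (d / 2 + 1)) (Set.Ici (2 : ℝ)) ∧
      ∀ d : ℝ, 2 ≤ d → 2 * Real.sqrt π * Gamma ((d + 1) / 2) / Gamma (d / 2 + 1) ≤ π := by
  have key : AntitoneOn (fun d : ℝ => Gamma ((d + 1) / 2) / Gamma (d / 2 + 1))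
      (Set.Ici (2 : ℝ)) := by
    intro a ha b hb hab
    have ha' : (2:ℝ) ≤ a := ha
    have hx : (0:ℝ) < (a + 1) / 2 := by linarith
    have hxy : (a + 1) / 2 ≤ (b + 1) / 2 := by linarith
    have h := gamma_half_ratio_anti hx hxy
    have ea : a / 2 + 1 = (a + 1) / 2 + 1 / 2 := by ring
    have eb : b / 2 + 1 = (b + 1) / 2 + 1 / 2 := by ring
    simpa [ea, eb] using h
  refine ⟨key, fun d hd => ?_⟩
  have h := key (Set.mem_Ici.2 le_rfl) (Set.mem_Ici.2 hd) hd
  have h2 : Gamma ((2 + 1 : ℝ) / 2) / Gamma ((2:ℝ) / 2 + 1) = Real.sqrt π / 2 := by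
    have h32 : ((2:ℝ) + 1) / 2 = 1/2 + 1 := by norm_num
    have : Gamma ((2 + 1 : ℝ) / 2) = (1/2) * Real.sqrt π := by
      rw [h32, Real.Gamma_add_one (by norm_num), Real.Gamma_one_half_eq]
    rw [this, show (2:ℝ)/2 + 1 = 2 by norm_num, Real.Gamma_two]
    ring
  replace h : Gamma ((d + 1) / 2) / Gamma (d / 2 + 1) ≤
      Gamma ((2 + 1 : ℝ) / 2) / Gamma ((2:ℝ) / 2 + 1) := h
  rw [h2] at h
  have hsq : Real.sqrt π * Real.sqrt π = π := Real.mul_self_sqrt Real.pi_pos.le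
  have hnn : (0:ℝ) ≤ 2 * Real.sqrt π := by positivity
  calc 2 * Real.sqrt π * Gamma ((d + 1) / 2) / Gamma (d / 2 + 1)
      = 2 * Real.sqrt π * (Gamma ((d + 1) / 2) / Gamma (d / 2 + 1)) := by ring
    _ ≤ 2 * Real.sqrt π * (Real.sqrt π / 2) := by exact mul_le_mul_of_nonneg_left h hnn
    _ = Real.sqrt π * Real.sqrt π := by ring
    _ = π := hsq
end
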